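/- Let X be a restriction category with restriction coproducts and a restriction zero, and suppose the coproduct injections are restriction monics. Then the initial object 0 is a restriction zero if and only if the maps i* : A + B → A (restriction retractions of the first injections) are natural in B; they are always natural in A. -/

import Mathlib

/-!
Write `t B : B ⟶ 0` for `inr ≫ i* : B ⟶ 0 + B ⟶ 0`. Since `i*` is a restriction retraction of
`inl`, one gets `ρ (t B) = t B ≫ 0_B`, and uniqueness of restriction retractions forces
`i* = [1_A, t B ≫ 0_A] : A + B ⟶ A`. Naturality in `A` is then immediate, and naturality in `B`
amounts to `g ≫ t B' ≫ 0_A = t B ≫ 0_A`, which holds when `0` is terminal. Conversely, naturality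
in `B` applied to `A = B' = 0` and an arbitrary `m : B ⟶ 0` gives `m = t B`, so `0` is terminal,
and the zero endomaps `t A ≫ 0_A` are restriction idempotents because `ρ (t A) = t A ≫ 0_A`.
-/

open CategoryTheory CategoryTheory.Limits

universe v u

/-- A restriction category: a category with an operation assigning to each
morphism `f : A ⟶ B` a morphism `ρ f : A ⟶ A` satisfying axioms R.1–R.4.
(Composition is written diagrammatically: `f ≫ g` is "first `f`, then `g`",
so the paper's `g ∘ f` is `f ≫ g`.) -/
class RestrictionCategory (C : Type u) [Category.{v} C] where
  ρ : ∀ {A B : C}, (A ⟶ B) → (A ⟶ A)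
  R1 : ∀ {A B : C} (f : A ⟶ B), ρ f ≫ f = f
  R2 : ∀ {A B D : C} (f : A ⟶ B) (g : A ⟶ D), ρ f ≫ ρ g = ρ g ≫ ρ f
  R3 : ∀ {A B D : C} (f : A ⟶ B) (g : A ⟶ D), ρ (ρ f ≫ g) = ρ f ≫ ρ g
  R4 : ∀ {A B D : C} (f : A ⟶ B) (g : B ⟶ D), f ≫ ρ g = ρ (f ≫ g) ≫ f

open RestrictionCategory

namespace RestrictionCategory

section Basic

variable {C : Type u} [Category.{v} C] [RestrictionCategory C]

lemma rho_id (A : C) : ρ (𝟙 A) = 𝟙 A := by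
  simpa using R1 (𝟙 A)

lemma rho_comp_rho_comp {A B D : C} (f : A ⟶ B) (g : B ⟶ D) :
    ρ (f ≫ g) ≫ ρ f = ρ (f ≫ g) := by
  have hf : ρ f ≫ f ≫ g = f ≫ g := by rw [← Category.assoc, R1]
  rw [R2, ← R3, hf]

lemma rho_comp_rho {A B D : C} (f : A ⟶ B) (g : B ⟶ D) :
    ρ (f ≫ ρ g) = ρ (f ≫ g) := by
  rw [R4, R3, rho_comp_rho_comp]

lemma rho_comp_of_rho_eq_id {A B D : C} (f : A ⟶ B) {g : B ⟶ D} (hg : ρ g = 𝟙 B) :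
    ρ (f ≫ g) = ρ f := by
  rw [← rho_comp_rho, hg, Category.comp_id]

def IsRestrictionRetraction {A B : C} (m : A ⟶ B) (r : B ⟶ A) : Prop :=
  m ≫ r = 𝟙 A ∧ r ≫ m = ρ r

namespace IsRestrictionRetraction

variable {A B : C} {m : A ⟶ B} {r : B ⟶ A}

lemma rho_comp_comp (h : IsRestrictionRetraction m r) {D : C} (f : D ⟶ B) :
    ρ (f ≫ r) ≫ f = f ≫ r ≫ m := by
  rw [← R4, h.2]

lemma eq {r' : B ⟶ A} (h : IsRestrictionRetraction m r) (h' : IsRestrictionRetraction m r') :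
    r = r' := by
  have hr : ρ r ≫ r' = r := by rw [← h.2, Category.assoc, h'.1, Category.comp_id]
  have hr' : ρ r' ≫ r = r' := by rw [← h'.2, Category.assoc, h.1, Category.comp_id]
  have hρ : ρ r = ρ r' := by
    rw [← hr, R3, R2, ← R3, hr']
  rw [← hr', ← hρ, R1]

end IsRestrictionRetraction

end Basic

section Coproducts

variable {C : Type u} [Category.{v} C] [HasBinaryCoproducts C] [HasInitial C]
  {istar : ∀ A B : C, A ⨿ B ⟶ A}

variable (istar) in
/-- The only candidate for the map to `0` as a terminal object. -/
noncomputable def toInitial (B : C) : B ⟶ ⊥_ C :=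
  coprod.inr ≫ istar (⊥_ C) B

lemma eq_toInitial_of_natural
    (hN : ∀ (A B B' : C) (g : B ⟶ B'), coprod.map (𝟙 A) g ≫ istar A B' = istar A B)
    (B : C) (m : B ⟶ ⊥_ C) : m = toInitial istar B := by
  have h := congrArg (coprod.inr ≫ ·) (hN (⊥_ C) B (⊥_ C) m)
  simp only [coprod.inr_map_assoc] at h
  rwa [initial.hom_ext (coprod.inr ≫ istar _ _) (𝟙 _), Category.comp_id] at h

variable [RestrictionCategory C]

lemma rho_toInitial (hi : ∀ A B : C, IsRestrictionRetraction coprod.inl (istar A B)) (B : C) :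
    ρ (toInitial istar B) = toInitial istar B ≫ initial.to B := by
  have h := congrArg (· ≫ coprod.desc (initial.to B) (𝟙 B))
    ((hi (⊥_ C) B).rho_comp_comp coprod.inr)
  simpa only [toInitial, Category.assoc, coprod.inr_desc, coprod.inl_desc, Category.comp_id]
    using h

lemma rho_toInitial_comp (hi : ∀ A B : C, IsRestrictionRetraction coprod.inl (istar A B))
    (A B : C) : ρ (toInitial istar B ≫ initial.to A) = toInitial istar B ≫ initial.to B := by
  rw [rho_comp_of_rho_eq_id _ (initial.hom_ext _ _), rho_toInitial hi]

lemma istar_eq_desc (hi : ∀ A B : C, IsRestrictionRetraction coprod.inl (istar A B)) (A B : C) :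
    istar A B = coprod.desc (𝟙 A) (toInitial istar B ≫ initial.to A) := by
  refine (hi A B).eq ⟨coprod.inl_desc _ _, ?_⟩
  ext
  · rw [coprod.inl_desc_assoc, Category.id_comp, R4, coprod.inl_desc, rho_id, Category.id_comp]
  · rw [coprod.inr_desc_assoc, R4, coprod.inr_desc, rho_toInitial_comp hi, Category.assoc,
      Category.assoc, initial.to_comp, initial.to_comp]

lemma inr_comp_istar (hi : ∀ A B : C, IsRestrictionRetraction coprod.inl (istar A B)) (A B : C) :
    coprod.inr ≫ istar A B = toInitial istar B ≫ initial.to A := by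
  rw [istar_eq_desc hi, coprod.inr_desc]

lemma coprod_map_comp_istar_left (hi : ∀ A B : C, IsRestrictionRetraction coprod.inl (istar A B))
    {A A' : C} (B : C) (f : A ⟶ A') :
    coprod.map f (𝟙 B) ≫ istar A' B = istar A B ≫ f := by
  ext
  · rw [coprod.inl_map_assoc, (hi A' B).1, Category.comp_id, ← Category.assoc, (hi A B).1,
      Category.id_comp]
  · rw [coprod.inr_map_assoc, Category.id_comp, inr_comp_istar hi, ← Category.assoc,
      inr_comp_istar hi, Category.assoc, initial.to_comp]

lemma coprod_map_comp_istar_right (hi : ∀ A B : C, IsRestrictionRetraction coprod.inl (istar A B))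
    (hT : IsTerminal (⊥_ C)) (A : C) {B B' : C} (g : B ⟶ B') :
    coprod.map (𝟙 A) g ≫ istar A B' = istar A B := by
  ext
  · rw [coprod.inl_map_assoc, (hi A B').1, (hi A B).1, Category.comp_id]
  · rw [coprod.inr_map_assoc, inr_comp_istar hi, inr_comp_istar hi, ← Category.assoc,
      hT.hom_ext (g ≫ _) (toInitial istar B)]

end Coproducts

end RestrictionCategory

theorem stmt_9_general {C : Type u} [Category.{v} C] [RestrictionCategory C]
    [HasBinaryCoproducts C] [HasInitial C]
    (istar : ∀ A B : C, (A ⨿ B) ⟶ A)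
    (hi : ∀ A B : C, (coprod.inl : A ⟶ A ⨿ B) ≫ istar A B = 𝟙 A ∧
      istar A B ≫ (coprod.inl : A ⟶ A ⨿ B) = ρ (istar A B)) :
    ((∃ hT : IsTerminal (⊥_ C), ∀ A : C,
        ρ (hT.from A ≫ initial.to A) = hT.from A ≫ initial.to A) ↔
     (∀ (A B B' : C) (g : B ⟶ B'),
        coprod.map (𝟙 A) g ≫ istar A B' = istar A B)) ∧
    (∀ (A A' B : C) (f : A ⟶ A'),
        coprod.map f (𝟙 B) ≫ istar A' B = istar A B ≫ f) := by
  have hi' : ∀ A B : C, IsRestrictionRetraction coprod.inl (istar A B) := hi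
  refine ⟨⟨fun ⟨hT, _⟩ A _ _ g => coprod_map_comp_istar_right hi' hT A g, fun hN => ?_⟩,
    fun _ _ B f => coprod_map_comp_istar_left hi' B f⟩
  let hT : IsTerminal (⊥_ C) := .ofUniqueHom (toInitial istar) (eq_toInitial_of_natural hN)
  refine ⟨hT, fun A => ?_⟩
  rw [hT.hom_ext (hT.from A) (toInitial istar A)]
  exact rho_toInitial_comp hi' A A

/-- Let `X` be a restriction category with coproducts whose injections are
restriction monics (with given restriction retractions `istar`, `jstar`).
Then the initial object is a restriction zero (i.e. it is also terminal, and
the zero endomaps are restriction idempotents) if and only if the maps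
`istar A B : A ⨿ B ⟶ A` are natural in `B`; and they are always natural
in `A`. -/
theorem stmt_9 {C : Type u} [Category.{v} C] [RestrictionCategory C]
    [HasBinaryCoproducts C] [HasInitial C]
    (istar : ∀ A B : C, (A ⨿ B) ⟶ A) (jstar : ∀ A B : C, (A ⨿ B) ⟶ B)
    (hi : ∀ A B : C, (coprod.inl : A ⟶ A ⨿ B) ≫ istar A B = 𝟙 A ∧
      istar A B ≫ (coprod.inl : A ⟶ A ⨿ B) = ρ (istar A B))
    (hj : ∀ A B : C, (coprod.inr : B ⟶ A ⨿ B) ≫ jstar A B = 𝟙 B ∧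
      jstar A B ≫ (coprod.inr : B ⟶ A ⨿ B) = ρ (jstar A B)) :
    ((∃ hT : IsTerminal (⊥_ C), ∀ A : C,
        ρ (hT.from A ≫ initial.to A) = hT.from A ≫ initial.to A) ↔
     (∀ (A B B' : C) (g : B ⟶ B'),
        coprod.map (𝟙 A) g ≫ istar A B' = istar A B)) ∧
    (∀ (A A' B : C) (f : A ⟶ A'),
        coprod.map f (𝟙 B) ≫ istar A' B = istar A B ≫ f) :=
  stmt_9_general istar hi
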